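/- arXiv:2312.10026 — 4 statements merged into one kernel-verified Lean document; each statement's English description precedes it below -/
import Mathlib

section
/- Let r_d denote the radius of the Euclidean ball of volume 1 in ℝ^d, with d ≥ 4. If x, y ∈ ℝ^d satisfy ‖x - y‖ ≥ t for t ≥ 0, then Vol(B_x(2r_d) ∩ B_y(2r_d)) ≤ 2^d · exp(-t²/4). -/
/-!
By Apollonius' theorem every point of `B_x(2r) ∩ B_y(2r)` lies within `√(4r² - t²/4)` of the
midpoint of `x` and `y`, so by scaling the intersection has volume at most
`(4 - t²/(4r²))^(d/2) = 2^d (1 - t²/(16r²))^(d/2) ≤ 2^d exp(-d t²/(32 r²))`, and `r² ≤ d/8` turns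
this into `2^d exp(-t²/4)`. The radius bound comes from `r^d π^(d/2) = Γ(d/2 + 1)` together with
`Γ(d/2 + 1)² ≤ (3d/8)^d` and `π ≥ 3`.
-/

open Real MeasureTheory Metric Module

namespace Real

theorem Gamma_half_add_one_sq_le_add_two {n : ℕ} (hn : 0 < n)
    (h : Gamma (n / 2 + 1) ^ 2 ≤ (3 * n / 8) ^ n) :
    Gamma ((n + 2 : ℕ) / 2 + 1) ^ 2 ≤ (3 * (n + 2 : ℕ) / 8) ^ (n + 2) := by
  have hn' : (0 : ℝ) < n := by exact_mod_cast hn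
  have hrec : Gamma ((n + 2 : ℕ) / 2 + 1) = (n / 2 + 1) * Gamma (n / 2 + 1) := by
    rw [← Gamma_add_one (by positivity)]
    push_cast
    ring_nf
  have hbernoulli : 3 * (3 * n / 8 : ℝ) ^ n ≤ (3 * (n + 2) / 8) ^ n := by
    have := one_add_mul_le_pow (a := 2 / (n : ℝ)) (by linarith [div_nonneg zero_le_two hn'.le]) n
    rw [mul_div_cancel₀ _ hn'.ne'] at this
    calc 3 * (3 * n / 8 : ℝ) ^ n ≤ (1 + 2 / n) ^ n * (3 * n / 8) ^ n := by gcongr; linarith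
      _ = (3 * (n + 2) / 8) ^ n := by rw [← mul_pow]; congr 1; field_simp
  rw [hrec, mul_pow, pow_add]
  push_cast
  calc ((n : ℝ) / 2 + 1) ^ 2 * Gamma (n / 2 + 1) ^ 2 ≤ (n / 2 + 1) ^ 2 * (3 * n / 8) ^ n := by
        gcongr
    _ ≤ (3 * ((n : ℝ) + 2) / 8) ^ 2 * (3 * (3 * n / 8) ^ n) := by
        rw [← mul_assoc]; gcongr; nlinarith
    _ ≤ (3 * ((n : ℝ) + 2) / 8) ^ n * (3 * (n + 2) / 8) ^ 2 := by rw [mul_comm]; gcongr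

/-- The constant `3/8` is chosen below `π/8`, with room for the base cases `n = 4, 5`. -/
theorem Gamma_half_add_one_sq_le {n : ℕ} (hn : 4 ≤ n) :
    Gamma (n / 2 + 1) ^ 2 ≤ (3 * n / 8) ^ n := by
  obtain ⟨k, rfl⟩ := Nat.exists_eq_add_of_le' hn
  induction k using Nat.twoStepInduction with
  | zero =>
    rw [show ((0 + 4 : ℕ) : ℝ) / 2 + 1 = (2 : ℕ) + 1 by norm_num, Gamma_nat_eq_factorial]
    norm_num [Nat.factorial]
  | one =>
    have h : Gamma (7 / 2) = 15 / 8 * √π := by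
      rw [show (7 / 2 : ℝ) = 1 / 2 + 1 + 1 + 1 by norm_num, Gamma_add_one (by norm_num),
        Gamma_add_one (by norm_num), Gamma_add_one (by norm_num), Gamma_one_half_eq]
      ring
    rw [show ((1 + 4 : ℕ) : ℝ) / 2 + 1 = 7 / 2 by norm_num, h, mul_pow, sq_sqrt pi_pos.le]
    nlinarith [pi_le_four]
  | more k ih _ =>
    exact Gamma_half_add_one_sq_le_add_two (by omega) (ih (by omega))

end Real

theorem sq_le_of_volume_closedBall_eq_one {E : Type*} [NormedAddCommGroup E]
    [InnerProductSpace ℝ E] [FiniteDimensional ℝ E] [MeasurableSpace E] [BorelSpace E]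
    (hE : 4 ≤ finrank ℝ E) {r : ℝ} (hr : 0 ≤ r) (hvol : volume (closedBall (0 : E) r) = 1) :
    r ^ 2 ≤ finrank ℝ E / 8 := by
  have : Nontrivial E := Module.nontrivial_of_finrank_pos (R := ℝ) (by omega)
  set n := finrank ℝ E
  rw [InnerProductSpace.volume_closedBall, ← ENNReal.ofReal_pow hr,
    ← ENNReal.ofReal_mul (by positivity), ENNReal.ofReal_eq_one] at hvol
  have hG : 0 < Gamma (n / 2 + 1) := Gamma_pos_of_pos (by positivity)
  have hGamma : (r ^ 2 * π) ^ n = Gamma (n / 2 + 1) ^ 2 := by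
    rw [mul_div_assoc', div_eq_one_iff_eq hG.ne'] at hvol
    rw [← hvol, ← mul_pow, ← pow_mul, mul_comm n 2, pow_mul, mul_pow r, sq_sqrt pi_pos.le]
  have hbound : r ^ 2 * π ≤ 3 * n / 8 := le_of_pow_le_pow_left₀ (by omega) (by positivity)
    (hGamma.trans_le (Gamma_half_add_one_sq_le hE))
  nlinarith [pi_gt_three]

theorem closedBall_inter_closedBall_subset_closedBall_midpoint {E : Type*}
    [NormedAddCommGroup E] [InnerProductSpace ℝ E] {x y : E} {R t : ℝ} (ht : 0 ≤ t)
    (hxy : t ≤ dist x y) :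
    closedBall x R ∩ closedBall y R ⊆ closedBall (midpoint ℝ x y) √(R ^ 2 - t ^ 2 / 4) := by
  rintro z ⟨hzx, hzy⟩
  rw [mem_closedBall] at hzx hzy ⊢
  have hApollonius :=
    EuclideanGeometry.dist_sq_add_dist_sq_eq_two_mul_dist_midpoint_sq_add_half_dist_sq z x y
  have hzx2 := pow_le_pow_left₀ dist_nonneg hzx 2
  have hzy2 := pow_le_pow_left₀ dist_nonneg hzy 2
  have hxy2 := pow_le_pow_left₀ ht hxy 2
  refine (abs_of_nonneg dist_nonneg).symm.trans_le (abs_le_sqrt ?_)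
  linarith

theorem MeasureTheory.Measure.addHaar_closedBall_of_addHaar_closedBall_eq_one {E : Type*}
    [NormedAddCommGroup E] [NormedSpace ℝ E] [MeasurableSpace E] [BorelSpace E]
    [FiniteDimensional ℝ E] (μ : Measure E) [μ.IsAddHaarMeasure] {r : ℝ} (hr : 0 < r)
    (hμ : μ (closedBall 0 r) = 1) (x : E) {ρ : ℝ} (hρ : 0 ≤ ρ) :
    μ (closedBall x ρ) = ENNReal.ofReal ((ρ / r) ^ finrank ℝ E) := by
  calc μ (closedBall x ρ) = μ (closedBall x (ρ / r * r)) := by rw [div_mul_cancel₀ ρ hr.ne']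
    _ = ENNReal.ofReal ((ρ / r) ^ finrank ℝ E) := by
      rw [addHaar_closedBall_mul μ x (by positivity) hr.le, hμ, mul_one]

theorem sqrt_sq_sub_sq_div_four_le_mul_exp {R t d : ℝ} (hR : 0 ≤ R) (hd : 0 < d)
    (hRd : R ^ 2 ≤ d / 2) : √(R ^ 2 - t ^ 2 / 4) ≤ R * exp (-t ^ 2 / (4 * d)) := by
  have hexp : 1 - t ^ 2 / (2 * d) ≤ exp (-t ^ 2 / (4 * d)) ^ 2 := by
    rw [← exp_nat_mul]
    convert add_one_le_exp (-t ^ 2 / (2 * d)) using 2 <;> push_cast <;> ring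
  have hlin : R ^ 2 * (t ^ 2 / (2 * d)) ≤ t ^ 2 / 4 :=
    calc R ^ 2 * (t ^ 2 / (2 * d)) ≤ d / 2 * (t ^ 2 / (2 * d)) := by gcongr
      _ = t ^ 2 / 4 := by field_simp; ring
  rw [sqrt_le_left (by positivity)]
  nlinarith [mul_le_mul_of_nonneg_left hexp (sq_nonneg R)]

theorem volume_ball_intersection (d : ℕ) (hd : 4 ≤ d) (r : ℝ) (hr : 0 < r)
    (hvol : MeasureTheory.volume (Metric.closedBall (0 : EuclideanSpace ℝ (Fin d)) r) = 1)
    (x y : EuclideanSpace ℝ (Fin d)) (t : ℝ) (ht : 0 ≤ t) (hxy : t ≤ ‖x - y‖) :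
    MeasureTheory.volume (Metric.closedBall x (2*r) ∩ Metric.closedBall y (2*r))
      ≤ ENNReal.ofReal (2^d * Real.exp (-t^2/4)) := by
  have hrd : r ^ 2 ≤ d / 8 := by
    simpa using sq_le_of_volume_closedBall_eq_one (by simpa using hd) hr.le hvol
  have hd_pos : (0 : ℝ) < d := by positivity
  have hρ : √((2 * r) ^ 2 - t ^ 2 / 4) / r ≤ 2 * exp (-t ^ 2 / (4 * d)) := by
    rw [div_le_iff₀ hr, mul_right_comm]
    exact sqrt_sq_sub_sq_div_four_le_mul_exp (by positivity) hd_pos (by linarith)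
  calc volume (closedBall x (2 * r) ∩ closedBall y (2 * r))
      ≤ volume (closedBall (midpoint ℝ x y) √((2 * r) ^ 2 - t ^ 2 / 4)) :=
        measure_mono (closedBall_inter_closedBall_subset_closedBall_midpoint ht
          (by rwa [dist_eq_norm]))
    _ = ENNReal.ofReal ((√((2 * r) ^ 2 - t ^ 2 / 4) / r) ^ d) := by
        rw [Measure.addHaar_closedBall_of_addHaar_closedBall_eq_one volume hr hvol _
          (sqrt_nonneg _), finrank_euclideanSpace_fin]
    _ ≤ ENNReal.ofReal (2 ^ d * exp (-t ^ 2 / 4)) := by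
        gcongr
        calc (√((2 * r) ^ 2 - t ^ 2 / 4) / r) ^ d ≤ (2 * exp (-t ^ 2 / (4 * d))) ^ d := by
              gcongr
          _ = 2 ^ d * exp (-t ^ 2 / 4) := by
              rw [mul_pow, ← exp_nat_mul]; congr 2; field_simp
end

section
/- Let G be a graph where every vertex has degree Δ-1 or Δ, with maximum codegree at most ηΔ, where Δ ≥ 1, γ ≤ 1/2, and Δ^{-1/2} ≤ η ≤ γ²/8. Let A be a random subset of V(G) including each vertex independently with probability p = γ/Δ, and let G' = G \ (A ∪ N(A)). Then for every vertex v: E(d_{G'}(v) | v ∈ G') ≤ (1 - γ + γ²)·d_G(v). -/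
/-!
A vertex `u` survives exactly when its closed neighbourhood `N[u]` avoids `A`, so given that `v`
survives, a neighbour `u` of `v` survives with probability `(1 - p) ^ |N[u] \ N[v]|`. Small
codegree makes `|N[u] \ N[v]| ≥ (1 - η) Δ - 2`, and Bernoulli's inequality then gives
`(1 - p) ^ k ≤ 1 / (1 + k p) ≤ 1 / (1 + γ - γ³/4) ≤ 1 - γ + γ²`. Linearity of expectation over the
`d(v)` neighbours of `v` finishes the proof.
-/

open MeasureTheory ProbabilityTheory Finset

theorem one_sub_pow_le_inv_one_add_mul {p : ℝ} (hp0 : 0 ≤ p) (hp1 : p ≤ 1) (k : ℕ) :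
    (1 - p) ^ k ≤ (1 + k * p)⁻¹ := by
  have hBernoulli : 1 + k * p ≤ (1 + p) ^ k := one_add_mul_le_pow (by linarith) k
  have hprod : (1 - p) ^ k * (1 + p) ^ k ≤ 1 := by
    rw [← mul_pow]
    exact pow_le_one₀ (by nlinarith) (by nlinarith)
  rw [← one_div, le_div_iff₀ (by positivity)]
  calc (1 - p) ^ k * (1 + k * p) ≤ (1 - p) ^ k * (1 + p) ^ k :=
        mul_le_mul_of_nonneg_left hBernoulli (pow_nonneg (by linarith) k)
    _ ≤ 1 := hprod

theorem inv_one_add_sub_pow_three_div_four_le {γ : ℝ} (hγ0 : 0 < γ) (hγ : γ ≤ 1/2) :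
    (1 + (γ - γ ^ 3 / 4))⁻¹ ≤ 1 - γ + γ ^ 2 := by
  have hγ2 : γ ^ 2 ≤ 1 / 4 := by nlinarith
  have hγ3 : γ ^ 3 ≤ γ / 4 := by nlinarith
  rw [inv_le_iff_one_le_mul₀ (by linarith)]
  nlinarith [pow_pos hγ0 3, pow_pos hγ0 4, mul_le_mul_of_nonneg_left hγ2 (pow_pos hγ0 3).le]

theorem inv_le_sq_of_rpow_neg_half_le {x η : ℝ} (hx : 0 < x) (h : x ^ (-(1:ℝ)/2) ≤ η) :
    x⁻¹ ≤ η ^ 2 := by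
  rw [show -(1:ℝ)/2 = -(1/2) by ring, Real.rpow_neg hx.le, ← Real.sqrt_eq_rpow] at h
  calc x⁻¹ = (Real.sqrt x)⁻¹ ^ 2 := by rw [inv_pow, Real.sq_sqrt hx.le]
    _ ≤ η ^ 2 := pow_le_pow_left₀ (by positivity) h 2

theorem one_sub_div_pow_le {Δ γ η : ℝ} (hΔ : 0 < Δ) (hγ0 : 0 < γ) (hγ : γ ≤ 1/2)
    (hη0 : 0 ≤ η) (hη : η ≤ γ ^ 2 / 8) (hΔη : Δ⁻¹ ≤ η ^ 2) {k : ℕ} (hk : (1 - η) * Δ - 2 ≤ k) :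
    (1 - γ / Δ) ^ k ≤ 1 - γ + γ ^ 2 := by
  have hp0 : 0 ≤ γ / Δ := by positivity
  have hη2 : η ^ 2 ≤ γ ^ 4 / 64 := by nlinarith
  have hp1 : γ / Δ ≤ 1 := by
    have hγ4 : γ ^ 4 ≤ 1 := pow_le_one₀ hγ0.le (by linarith)
    rw [div_eq_mul_inv]
    nlinarith [mul_le_mul_of_nonneg_left (hΔη.trans hη2) hγ0.le]
  have hkp : γ - γ ^ 3 / 4 ≤ k * (γ / Δ) := by
    have hexpand : ((1 - η) * Δ - 2) * (γ / Δ) = γ - η * γ - 2 * γ * Δ⁻¹ := by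
      field_simp
    nlinarith [pow_pos hγ0 3, pow_pos hγ0 5, mul_le_mul_of_nonneg_right hk hp0,
      mul_le_mul_of_nonneg_left (hΔη.trans hη2) (by linarith : (0:ℝ) ≤ 2 * γ)]
  calc (1 - γ / Δ) ^ k ≤ (1 + k * (γ / Δ))⁻¹ := one_sub_pow_le_inv_one_add_mul hp0 hp1 k
    _ ≤ (1 + (γ - γ ^ 3 / 4))⁻¹ := by gcongr; nlinarith
    _ ≤ 1 - γ + γ ^ 2 := inv_one_add_sub_pow_three_div_four_le hγ0 hγ

theorem card_neighborFinset_le_card_sdiff_add_card_inter {V : Type*} [Fintype V] [DecidableEq V]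
    (G : SimpleGraph V) [DecidableRel G.Adj] {u v : V} :
    #(G.neighborFinset u) ≤ #(insert u (G.neighborFinset u) \ insert v (G.neighborFinset v))
      + #(G.neighborFinset u ∩ G.neighborFinset v) + 1 := by
  have hsub : G.neighborFinset u ⊆ (insert u (G.neighborFinset u) \ insert v (G.neighborFinset v))
      ∪ insert v (G.neighborFinset u ∩ G.neighborFinset v) := by
    intro w hw
    simp only [Finset.mem_union, Finset.mem_sdiff, Finset.mem_insert, Finset.mem_inter] at hw ⊢
    tauto
  calc _ ≤ _ := Finset.card_le_card hsub
    _ ≤ _ := Finset.card_union_le _ _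
    _ ≤ _ := by grw [Finset.card_insert_le]; omega

theorem sub_two_le_card_closedNbhd_sdiff {V : Type*} [Fintype V] [DecidableEq V]
    (G : SimpleGraph V) [DecidableRel G.Adj] {u v : V} {Δ η : ℝ}
    (hdeg : Δ - 1 ≤ G.degree u) (hcodeg : (Nat.card {w | G.Adj u w ∧ G.Adj v w} : ℝ) ≤ η * Δ) :
    (1 - η) * Δ - 2 ≤ #(insert u (G.neighborFinset u) \ insert v (G.neighborFinset v)) := by
  have hcommon :
      Nat.card {w | G.Adj u w ∧ G.Adj v w} = #(G.neighborFinset u ∩ G.neighborFinset v) := by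
    rw [Nat.card_coe_set_eq, ← Set.ncard_coe_finset]
    congr 1; ext w; simp
  have hcard : (#(G.neighborFinset u) : ℝ) ≤ #(insert u (G.neighborFinset u) \
      insert v (G.neighborFinset v)) + #(G.neighborFinset u ∩ G.neighborFinset v) + 1 := by
    exact_mod_cast card_neighborFinset_le_card_sdiff_add_card_inter G
  rw [hcommon] at hcodeg
  rw [G.card_neighborFinset_eq_degree] at hcard
  linarith

section BernoulliProduct

variable {V : Type*} [Fintype V] (p : NNReal) (hp : p ≤ 1)

theorem measure_pi_bernoulli_forall_false (S : Finset V) :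
    (Measure.pi fun _ : V => (PMF.bernoulli p hp).toMeasure) {ω | ∀ w ∈ S, ω w = false}
      = (1 - (p : ENNReal)) ^ #S := by
  classical
  have hcyl : {ω : V → Bool | ∀ w ∈ S, ω w = false}
      = Set.univ.pi fun w => if w ∈ S then {false} else Set.univ := by
    ext ω
    simp only [Set.mem_ofPred_eq, Set.mem_pi, Set.mem_univ, true_implies]
    refine forall_congr' fun w => ?_
    split_ifs with hw <;> simp [hw]
  have hfalse : (PMF.bernoulli p hp).toMeasure {false} = 1 - (p : ENNReal) := by
    simp [PMF.bernoulli]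
  rw [hcyl, Measure.pi_pi]
  simp_rw [apply_ite (fun s => (PMF.bernoulli p hp).toMeasure s), hfalse, measure_univ]
  rw [Finset.prod_ite_mem, Finset.univ_inter, Finset.prod_const]

theorem cond_pi_bernoulli_forall_false [DecidableEq V] (hp1 : p < 1) (S T : Finset V) :
    ((Measure.pi fun _ : V => (PMF.bernoulli p hp).toMeasure)[|{ω | ∀ w ∈ T, ω w = false}]).real
        {ω | ∀ w ∈ S, ω w = false} = (1 - (p : ℝ)) ^ #(S \ T) := by
  have hinter : {ω : V → Bool | ∀ w ∈ T, ω w = false} ∩ {ω | ∀ w ∈ S, ω w = false}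
      = {ω | ∀ w ∈ T ∪ S, ω w = false} := by
    ext ω
    simp only [Set.mem_inter_iff, Set.mem_ofPred_eq, Finset.mem_union, or_imp, forall_and]
  have hq : (1 - (p : ENNReal)) ^ #T ≠ 0 :=
    pow_ne_zero _ (tsub_pos_of_lt (by exact_mod_cast hp1)).ne'
  rw [measureReal_def, cond_apply (Set.toFinite _).measurableSet, hinter,
    measure_pi_bernoulli_forall_false, measure_pi_bernoulli_forall_false,
    Finset.union_comm, ← Finset.card_sdiff_add_card, pow_add,
    mul_comm _ ((1 - (p : ENNReal)) ^ #T), ENNReal.inv_mul_cancel_left hq (by simp),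
    ENNReal.toReal_pow, ENNReal.toReal_sub_of_le (by simpa using hp) (by simp)]
  simp

end BernoulliProduct

theorem integral_ncard_mem_eq_sum {Ω ι : Type*} [MeasurableSpace Ω] (μ : Measure Ω)
    [IsFiniteMeasure μ] (s : Finset ι) (E : ι → Set Ω) (hE : ∀ i ∈ s, MeasurableSet (E i)) :
    ∫ ω, ({i | i ∈ s ∧ ω ∈ E i}.ncard : ℝ) ∂μ = ∑ i ∈ s, μ.real (E i) := by
  classical
  have hcount : ∀ ω, ({i | i ∈ s ∧ ω ∈ E i}.ncard : ℝ) = ∑ i ∈ s, (E i).indicator 1 ω := by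
    intro ω
    rw [← Finset.coe_filter, Set.ncard_coe_finset]
    simp [Set.indicator_apply, Finset.sum_boole]
  simp_rw [hcount]
  rw [integral_finsetSum _ fun i hi => (integrable_const 1).indicator (hE i hi)]
  exact Finset.sum_congr rfl fun i hi => integral_indicator_one (hE i hi)

theorem expected_degree_after_nibble {V : Type} [Fintype V] (G : SimpleGraph V)
    [DecidableRel G.Adj] (Δ : ℕ) (γ η : ℝ) (hΔ : 1 ≤ Δ) (hγ0 : 0 < γ) (hγ : γ ≤ 1/2)
    (hη1 : (Δ : ℝ) ^ (-(1:ℝ)/2) ≤ η) (hη2 : η ≤ γ^2/8)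
    (hdeg : ∀ v : V, G.degree v = Δ - 1 ∨ G.degree v = Δ)
    (hcodeg : ∀ u v : V, u ≠ v → (Nat.card {w : V | G.Adj u w ∧ G.Adj v w} : ℝ) ≤ η * Δ)
    (hp : ENNReal.ofReal (γ / Δ) ≤ 1)
    (P : Measure (V → Bool))
    (hP : P = Measure.pi fun _ : V => (PMF.bernoulli (Real.toNNReal (γ / Δ)) (ENNReal.coe_le_one_iff.mp hp)).toMeasure)
    (inG' : V → (V → Bool) → Prop)
    (hinG' : ∀ u ω, inG' u ω ↔ (ω u = false ∧ ∀ w, G.Adj u w → ω w = false))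
    (v : V) :
    ∫ ω, (Nat.card {u : V | G.Adj v u ∧ inG' u ω} : ℝ) ∂(P[|{ω | inG' v ω}])
      ≤ (1 - γ + γ^2) * G.degree v := by
  classical
  subst hP
  have hΔ0 : (0 : ℝ) < Δ := by exact_mod_cast hΔ
  have hη0 : 0 ≤ η := (Real.rpow_nonneg hΔ0.le _).trans hη1
  have hp0 : 0 ≤ γ / Δ := by positivity
  have hp1 : (γ / Δ).toNNReal < 1 := Real.toNNReal_lt_one.2 <|
    (div_le_self hγ0.le (by exact_mod_cast hΔ)).trans_lt (by linarith)
  have hevent (u : V) : {ω | inG' u ω}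
      = {ω : V → Bool | ∀ w ∈ insert u (G.neighborFinset u), ω w = false} := by
    ext ω; simp [hinG']
  have hcount (ω : V → Bool) : Nat.card {u : V | G.Adj v u ∧ inG' u ω}
      = {u | u ∈ G.neighborFinset v ∧ ω ∈ {ω | inG' u ω}}.ncard := by
    simp only [Nat.card_coe_set_eq, SimpleGraph.mem_neighborFinset, Set.mem_ofPred_eq]
  simp_rw [hcount]
  rw [integral_ncard_mem_eq_sum _ _ _ fun _ _ => (Set.toFinite _).measurableSet]
  calc _ ≤ ∑ _u ∈ G.neighborFinset v, (1 - γ + γ ^ 2) := Finset.sum_le_sum fun u hu => ?_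
    _ = _ := by rw [Finset.sum_const, G.card_neighborFinset_eq_degree, nsmul_eq_mul, mul_comm]
  have hne : u ≠ v := (G.ne_of_adj ((G.mem_neighborFinset v u).1 hu)).symm
  have hdeg_u : (Δ : ℝ) - 1 ≤ G.degree u := by
    rcases hdeg u with h | h <;> simp [h, hΔ]
  rw [hevent u, hevent v, cond_pi_bernoulli_forall_false _ _ hp1, Real.coe_toNNReal _ hp0]
  exact one_sub_div_pow_le hΔ0 hγ0 hγ hη0 hη2 (inv_le_sq_of_rpow_neg_half_le hΔ0 hη1)
    (sub_two_le_card_closedNbhd_sdiff G hdeg_u (hcodeg u v hne))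
end

section
/- Let 0 < p ≤ 1/2 and let H be a bipartite graph with parts X and Y such that every pair of vertices x, x' ∈ X (including x = x') has at most ℓ common neighbors in Y. Let A be a random subset of Y including each vertex independently with probability p, and let S = |X \ N_H(A)|. Then for all r ≥ 0: P(S - E[S] ≥ r) ≤ exp(-r² / (4p(e_H(X,Y) + ℓ|X|²))). -/
/-!
Expose `A` one vertex at a time and follow the Doob martingale `𝔼[S | A ∩ T]`. Adding `y` to `A`
can only lower `S`, and by at most `d(y)`, the number of neighbours of `y`; so each increment is a
two-point variable that lies below its mean by at most `d(y)` with probability `p`, and from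
`exp (-s) ≤ 1 - s + s² / 2` its exponential moment at `t ≥ 0` is at most `exp (p t² d(y)² / 2)`.
Hence `𝔼 exp (t (S - 𝔼 S)) ≤ exp (p t² ∑ d(y)² / 2)`, double counting gives
`∑_y d(y)² = ∑_{x,x'} d(x,x') ≤ ℓ |X|²`, and Chernoff's bound with an optimal `t` concludes.
-/

open MeasureTheory ProbabilityTheory Function Finset Real

theorem Real.exp_neg_le_one_sub_add_sq_div_two {s : ℝ} (hs : 0 ≤ s) :
    exp (-s) ≤ 1 - s + s ^ 2 / 2 := by
  set g : ℝ → ℝ := fun v ↦ 1 - v + v ^ 2 / 2 - exp (-v)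
  have hg : ∀ u, HasDerivAt g (-1 + u + exp (-u)) u := fun u ↦ by
    refine ((((hasDerivAt_id u).const_sub 1).add ((hasDerivAt_pow 2 u).div_const 2)).sub
      (hasDerivAt_neg u).exp).congr_deriv ?_
    simp
  have hmono : Monotone g := monotone_of_deriv_nonneg (fun u ↦ (hg u).differentiableAt)
    fun u ↦ by rw [(hg u).deriv]; linarith [add_one_le_exp (-u)]
  simpa [g] using hmono hs

theorem Real.one_sub_add_mul_exp_neg_le {p s : ℝ} (hp0 : 0 ≤ p) (hs : 0 ≤ s) :
    1 - p + p * exp (-s) ≤ exp (p * (s ^ 2 / 2 - s)) := by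
  have := mul_le_mul_of_nonneg_left (exp_neg_le_one_sub_add_sq_div_two hs) hp0
  linarith [add_one_le_exp (p * (s ^ 2 / 2 - s))]

/-- A variable equal to `a` with probability `1 - p` and to `b ∈ [a - c, a]` with probability `p`
has an upper sub-Gaussian tail with variance proxy `p c²`. -/
theorem Real.one_sub_mul_exp_add_mul_exp_le {p t a b c : ℝ} (hp0 : 0 ≤ p) (ht : 0 ≤ t)
    (hab : 0 ≤ a - b) (hc : a - b ≤ c) :
    (1 - p) * exp (t * a) + p * exp (t * b)
      ≤ exp (t * ((1 - p) * a + p * b)) * exp (p * t ^ 2 * c ^ 2 / 2) := by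
  have hs : 0 ≤ t * (a - b) := mul_nonneg ht hab
  calc (1 - p) * exp (t * a) + p * exp (t * b)
      = exp (t * a) * (1 - p + p * exp (-(t * (a - b)))) := by
        have : exp (t * b) = exp (t * a) * exp (-(t * (a - b))) := by rw [← exp_add]; ring_nf
        rw [this]; ring
    _ ≤ exp (t * a) * exp (p * ((t * (a - b)) ^ 2 / 2 - t * (a - b))) := by
        gcongr; exact one_sub_add_mul_exp_neg_le hp0 hs
    _ ≤ exp (t * ((1 - p) * a + p * b)) * exp (p * t ^ 2 * c ^ 2 / 2) := by
        rw [← exp_add, ← exp_add, exp_le_exp]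
        have : (a - b) ^ 2 ≤ c ^ 2 := pow_le_pow_left₀ hab hc 2
        nlinarith [mul_le_mul_of_nonneg_left this (mul_nonneg hp0 (sq_nonneg t))]

section resample

variable {α Y : Type*} [Fintype Y] [DecidableEq Y]

theorem sum_prod_mul_sum_update [Fintype α] (w : α → ℝ) (F : (Y → α) → ℝ) (y : Y) :
    ∑ ω, (∏ z, w (ω z)) * ∑ a, w a * F (update ω y a)
      = (∑ a, w a) * ∑ ω, (∏ z, w (ω z)) * F ω := by
  set W : (Y → α) → ℝ := fun ω ↦ ∏ z, w (ω z)
  have hW : ∀ ω a, W ω * w a = w (ω y) * W (update ω y a) := fun ω a ↦ by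
    have key : ∀ b, W (update ω y b) = w b * ∏ z ∈ univ \ {y}, w (ω z) := fun b ↦ by
      simp only [W, apply_update (fun _ ↦ w), prod_update_of_mem (mem_univ y)]
    have h0 : W ω = w (ω y) * ∏ z ∈ univ \ {y}, w (ω z) := by simpa using key (ω y)
    rw [h0, key]; ring
  let e : (Y → α) × α ≃ (Y → α) × α :=
    Involutive.toPerm (fun ωa ↦ (update ωa.1 y ωa.2, ωa.1 y)) fun ⟨ω, a⟩ ↦ by simp
  calc ∑ ω, W ω * ∑ a, w a * F (update ω y a)
      = ∑ ωa : (Y → α) × α, w (e ωa).2 * W (e ωa).1 * F (e ωa).1 := by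
        simp only [Fintype.sum_prod_type, mul_sum, ← mul_assoc, hW]; rfl
    _ = (∑ a, w a) * ∑ ω, W ω * F ω := by
        rw [e.sum_comp (fun ωa ↦ w ωa.2 * W ωa.1 * F ωa.1), Fintype.sum_prod_type_right, sum_mul]
        simp only [mul_sum, mul_assoc]

variable [MeasurableSpace α] (μ : Measure α)

theorem integral_pi_eq_sum [Fintype α] [MeasurableSingletonClass α] [IsFiniteMeasure μ]
    (F : (Y → α) → ℝ) :
    ∫ ω, F ω ∂Measure.pi (fun _ : Y ↦ μ) = ∑ ω, (∏ y, μ.real {ω y}) * F ω := by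
  rw [integral_fintype .of_finite]
  simp [measureReal_def, ENNReal.toReal_prod]

theorem integral_pi_sum_update [Fintype α] [MeasurableSingletonClass α] [IsProbabilityMeasure μ]
    (F : (Y → α) → ℝ) (y : Y) :
    ∫ ω, ∑ a, μ.real {a} * F (update ω y a) ∂Measure.pi (fun _ : Y ↦ μ)
      = ∫ ω, F ω ∂Measure.pi (fun _ : Y ↦ μ) := by
  rw [integral_pi_eq_sum, integral_pi_eq_sum, sum_prod_mul_sum_update (fun a ↦ μ.real {a}),
    sum_measureReal_singleton, coe_univ, probReal_univ, one_mul]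

/-- `condAvg μ F T ω = 𝔼[F | ω restricted to T]`: the coordinates in `T` are frozen to those of
`ω`, the others are averaged out. -/
noncomputable def condAvg (F : (Y → α) → ℝ) (T : Finset Y) (ω : Y → α) : ℝ :=
  ∫ ω', F (T.piecewise ω ω') ∂Measure.pi (fun _ : Y ↦ μ)

variable {μ} {F : (Y → α) → ℝ} {T : Finset Y} {y : Y}

@[simp] theorem condAvg_empty (ω : Y → α) :
    condAvg μ F ∅ ω = ∫ ω', F ω' ∂Measure.pi (fun _ : Y ↦ μ) := by
  simp [condAvg]

@[simp] theorem condAvg_univ [IsProbabilityMeasure μ] (ω : Y → α) : condAvg μ F univ ω = F ω := by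
  simp [condAvg]

variable [Fintype α] [MeasurableSingletonClass α] [IsProbabilityMeasure μ]

theorem condAvg_eq_sum_condAvg_insert (hy : y ∉ T) (ω : Y → α) :
    condAvg μ F T ω = ∑ a, μ.real {a} * condAvg μ F (insert y T) (update ω y a) := by
  rw [condAvg, ← integral_pi_sum_update μ _ y, integral_finsetSum _ fun _ _ ↦ .of_finite]
  refine sum_congr rfl fun a _ ↦ ?_
  rw [condAvg, ← integral_const_mul]
  congr with ω'
  congr 2
  ext z
  by_cases hzy : z = y
  · subst hzy; simp [hy]
  · by_cases hz : z ∈ T <;> simp [hz, hzy]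

theorem condAvg_update_sub_mem_Icc {a b : α} {c : ℝ}
    (hF : ∀ ω, F (update ω y a) - F (update ω y b) ∈ Set.Icc 0 c) (hy : y ∈ T) (ω : Y → α) :
    condAvg μ F T (update ω y a) - condAvg μ F T (update ω y b) ∈ Set.Icc 0 c := by
  simp only [condAvg, ← update_piecewise_of_mem (hi := hy)]
  rw [← integral_sub .of_finite .of_finite]
  refine ⟨integral_nonneg fun ω' ↦ (hF _).1, ?_⟩
  simpa using integral_mono (μ := Measure.pi fun _ : Y ↦ μ) .of_finite (integrable_const c)
    fun ω' ↦ (hF _).2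

end resample

section bernoulli

variable {Y : Type*} [Fintype Y] [DecidableEq Y] (μ : Measure Bool) [IsProbabilityMeasure μ]

theorem measureReal_singleton_false : μ.real {false} = 1 - μ.real {true} := by
  have := sum_measureReal_singleton (μ := μ) univ
  simp only [Fintype.sum_bool, coe_univ, probReal_univ] at this
  linarith

variable {μ} {F : (Y → Bool) → ℝ} {c : Y → ℝ}

theorem sum_mul_exp_condAvg_insert_le
    (hF : ∀ ω y, F (update ω y false) - F (update ω y true) ∈ Set.Icc 0 (c y))
    {T : Finset Y} {y : Y} (hy : y ∉ T) {t : ℝ} (ht : 0 ≤ t) (m : ℝ) (ω : Y → Bool) :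
    ∑ b, μ.real {b} * exp (t * (condAvg μ F (insert y T) (update ω y b) - m))
      ≤ exp (t * (condAvg μ F T ω - m)) * exp (μ.real {true} * t ^ 2 * c y ^ 2 / 2) := by
  have hD := condAvg_update_sub_mem_Icc (μ := μ) (hF · y) (mem_insert_self y T) ω
  rw [← sub_sub_sub_cancel_right _ _ m] at hD
  have key :=
    one_sub_mul_exp_add_mul_exp_le (measureReal_nonneg (μ := μ) (s := {true})) ht hD.1 hD.2
  rw [condAvg_eq_sum_condAvg_insert hy, Fintype.sum_bool, Fintype.sum_bool,
    measureReal_singleton_false]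
  exact (add_comm _ _).trans_le (key.trans_eq (by congr 2; ring))

theorem integral_exp_mul_condAvg_sub_le
    (hF : ∀ ω y, F (update ω y false) - F (update ω y true) ∈ Set.Icc 0 (c y))
    {t : ℝ} (ht : 0 ≤ t) (T : Finset Y) :
    ∫ ω, exp (t * (condAvg μ F T ω - ∫ ω', F ω' ∂Measure.pi (fun _ : Y ↦ μ)))
        ∂Measure.pi (fun _ : Y ↦ μ)
      ≤ exp (∑ y ∈ T, μ.real {true} * t ^ 2 * c y ^ 2 / 2) := by
  induction T using Finset.induction_on with
  | empty => simp
  | insert y T hy ih =>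
    calc _ = ∫ ω, ∑ b, μ.real {b} * exp (t * (condAvg μ F (insert y T) (update ω y b)
              - ∫ ω', F ω' ∂Measure.pi (fun _ : Y ↦ μ))) ∂Measure.pi (fun _ : Y ↦ μ) :=
          (integral_pi_sum_update μ _ y).symm
      _ ≤ ∫ ω, exp (t * (condAvg μ F T ω - ∫ ω', F ω' ∂Measure.pi (fun _ : Y ↦ μ)))
              * exp (μ.real {true} * t ^ 2 * c y ^ 2 / 2) ∂Measure.pi (fun _ : Y ↦ μ) :=
          integral_mono .of_finite .of_finite (sum_mul_exp_condAvg_insert_le hF hy ht _)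
      _ ≤ exp (∑ y ∈ T, μ.real {true} * t ^ 2 * c y ^ 2 / 2)
            * exp (μ.real {true} * t ^ 2 * c y ^ 2 / 2) := by
          rw [integral_mul_const]; gcongr
      _ = _ := by rw [sum_insert hy, exp_add, mul_comm]

theorem measureReal_sub_integral_ge_le_exp
    (hF : ∀ ω y, F (update ω y false) - F (update ω y true) ∈ Set.Icc 0 (c y))
    {r V : ℝ} (hr : 0 ≤ r) (hV : ∑ y, c y ^ 2 ≤ V) :
    (Measure.pi fun _ : Y ↦ μ).real
        {ω | r ≤ F ω - ∫ ω', F ω' ∂Measure.pi (fun _ : Y ↦ μ)}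
      ≤ exp (-r ^ 2 / (2 * μ.real {true} * V)) := by
  set P := Measure.pi fun _ : Y ↦ μ
  set m := ∫ ω', F ω' ∂P
  set p := μ.real {true}
  have hpV : 0 ≤ p * V := mul_nonneg measureReal_nonneg
    ((sum_nonneg fun y _ ↦ sq_nonneg (c y)).trans hV)
  set t := r / (p * V)
  have ht : 0 ≤ t := div_nonneg hr hpV
  have hmgf : mgf (fun ω ↦ F ω - m) P t ≤ exp (p * t ^ 2 * V / 2) := by
    have := integral_exp_mul_condAvg_sub_le (μ := μ) hF ht univ
    rw [← sum_div, ← mul_sum] at this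
    simp only [condAvg_univ] at this
    refine this.trans (exp_le_exp.2 ?_)
    gcongr
  calc P.real {ω | r ≤ F ω - m}
      ≤ exp (-t * r) * mgf (fun ω ↦ F ω - m) P t := measure_ge_le_exp_mul_mgf r ht .of_finite
    _ ≤ exp (-t * r) * exp (p * t ^ 2 * V / 2) := by gcongr
    _ = exp (-r ^ 2 / (2 * p * V)) := by
        rw [← exp_add]
        congr 1
        rcases hpV.eq_or_lt with h | h
        · simp [t, ← h, mul_assoc]
        · simp only [t]; field_simp; ring

end bernoulli

section graph

variable {X Y : Type*} [Fintype X] [Fintype Y] (adj : X → Y → Prop) [DecidableRel adj]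

/-- `|X \ N(A)|` for the set `A = {y | ω y = true}`. -/
def numNonNeighbors (ω : Y → Bool) : ℕ := #{x | ∀ y, adj x y → ω y = false}

theorem numNonNeighbors_update_sub_mem_Icc [DecidableEq X] [DecidableEq Y] (ω : Y → Bool) (y : Y) :
    (numNonNeighbors adj (update ω y false) : ℝ) - numNonNeighbors adj (update ω y true)
      ∈ Set.Icc 0 (#{x | adj x y} : ℝ) := by
  set s : Bool → Finset X := fun b ↦ {x | ∀ z, adj x z → update ω y b z = false}
  have hsub : s true ⊆ s false := fun x hx ↦ by
    simp only [s, mem_filter, mem_univ, true_and] at hx ⊢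
    intro z hz
    by_cases hzy : z = y
    · simp [hzy]
    · simpa [hzy] using hx z hz
  have hsdiff : s false \ s true ⊆ ({x | adj x y} : Finset X) := fun x hx ↦ by
    simp only [s, mem_sdiff, mem_filter, mem_univ, true_and, not_forall] at hx ⊢
    obtain ⟨hfalse, z, hz, hzt⟩ := hx
    by_cases hzy : z = y
    · exact hzy ▸ hz
    · exact absurd (hfalse z hz) (by rwa [update_of_ne hzy] at hzt ⊢)
  change (#(s false) : ℝ) - #(s true) ∈ _
  refine ⟨sub_nonneg.2 (Nat.cast_le.2 (card_le_card hsub)), ?_⟩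
  rw [sub_le_iff_le_add, ← Nat.cast_add, Nat.cast_le]
  have := card_le_card hsdiff
  have := card_sdiff_of_subset hsub
  omega

theorem sum_card_adj_sq :
    ∑ y, #{x | adj x y} ^ 2 = ∑ x, ∑ x', #{y | adj x y ∧ adj x' y} := by
  simp only [sq, card_filter, sum_mul_sum, ite_zero_mul_ite_zero, mul_one]
  rw [sum_comm]
  exact sum_congr rfl fun x _ ↦ sum_comm

theorem sum_card_adj_sq_le {ℓ : ℕ} (hcod : ∀ x x', #{y | adj x y ∧ adj x' y} ≤ ℓ) :
    ∑ y, #{x | adj x y} ^ 2 ≤ ℓ * Fintype.card X ^ 2 :=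
  calc ∑ y, #{x | adj x y} ^ 2 ≤ ∑ _x : X, ∑ _x' : X, ℓ := by
        rw [sum_card_adj_sq]; exact sum_le_sum fun x _ ↦ sum_le_sum fun x' _ ↦ hcod x x'
    _ = ℓ * Fintype.card X ^ 2 := by simp [sq]; ring

end graph

theorem bipartite_concentration_general {X Y : Type} [Fintype X] [Fintype Y]
    (adj : X → Y → Prop) (p : ℝ) (hp0 : 0 < p)
    (hp' : ENNReal.ofReal p ≤ 1) (ℓ : ℕ)
    (hcod : ∀ x x' : X, Nat.card {y : Y | adj x y ∧ adj x' y} ≤ ℓ)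
    (P : Measure (Y → Bool))
    (hP : P = Measure.pi fun _ : Y => (PMF.bernoulli (Real.toNNReal p) (ENNReal.coe_le_one_iff.mp hp')).toMeasure)
    (S : (Y → Bool) → ℝ)
    (hS : ∀ ω, S ω = Nat.card {x : X | ∀ y, adj x y → ω y = false})
    (r : ℝ) (hr : 0 ≤ r) :
    P {ω | r ≤ S ω - ∫ ω', S ω' ∂P} ≤
      ENNReal.ofReal (Real.exp (-(r^2) /
        (4 * p * ((∑ x : X, (Nat.card {y : Y | adj x y} : ℝ)) + ℓ * (Fintype.card X)^2)))) := by
  classical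
  have hV : ∑ y, (#{x | adj x y} : ℝ) ^ 2
      ≤ 2 * ((∑ x : X, (Nat.card {y : Y | adj x y} : ℝ)) + ℓ * (Fintype.card X)^2) := by
    have hcodeg := sum_card_adj_sq_le adj fun x x' ↦ by
      simpa [Nat.card_eq_fintype_card, Fintype.card_subtype] using hcod x x'
    calc ∑ y, (#{x | adj x y} : ℝ) ^ 2 ≤ ℓ * Fintype.card X ^ 2 := by exact_mod_cast hcodeg
      _ ≤ _ := by
        have : 0 ≤ ∑ x : X, (Nat.card {y : Y | adj x y} : ℝ) := by positivity
        have : 0 ≤ (ℓ : ℝ) * Fintype.card X ^ 2 := by positivity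
        linarith
  have hS' : S = fun ω ↦ (numNonNeighbors adj ω : ℝ) :=
    funext fun ω ↦ by rw [hS, Nat.card_eq_fintype_card, Fintype.card_subtype]; rfl
  have hμ : (PMF.bernoulli (Real.toNNReal p) (ENNReal.coe_le_one_iff.mp hp')).toMeasure.real {true}
      = p := by
    simp [measureReal_def, PMF.bernoulli_apply, hp0.le]
  subst hP hS'
  rw [← ofReal_measureReal]
  refine ENNReal.ofReal_le_ofReal ((measureReal_sub_integral_ge_le_exp
    (numNonNeighbors_update_sub_mem_Icc adj) hr hV).trans_eq ?_)
  rw [hμ]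
  ring_nf

theorem bipartite_concentration {X Y : Type} [Fintype X] [Fintype Y]
    (adj : X → Y → Prop) (p : ℝ) (hp0 : 0 < p) (hp : p ≤ 1/2)
    (hp' : ENNReal.ofReal p ≤ 1) (ℓ : ℕ)
    (hcod : ∀ x x' : X, Nat.card {y : Y | adj x y ∧ adj x' y} ≤ ℓ)
    (P : Measure (Y → Bool))
    (hP : P = Measure.pi fun _ : Y => (PMF.bernoulli (Real.toNNReal p) (ENNReal.coe_le_one_iff.mp hp')).toMeasure)
    (S : (Y → Bool) → ℝ)
    (hS : ∀ ω, S ω = Nat.card {x : X | ∀ y, adj x y → ω y = false})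
    (r : ℝ) (hr : 0 ≤ r) :
    P {ω | r ≤ S ω - ∫ ω', S ω' ∂P} ≤
      ENNReal.ofReal (Real.exp (-(r^2) /
        (4 * p * ((∑ x : X, (Nat.card {y : Y | adj x y} : ℝ)) + ℓ * (Fintype.card X)^2)))) :=
  bipartite_concentration_general adj p hp0 hp' ℓ hcod P hP S hS r hr
end

section
/- For Δ ≥ 2 and n ≥ 2Δ⁴, let G be a graph on n vertices with maximum degree Δ(G) ≤ Δ. Then there exists a graph Ḡ on the same vertex set with E(Ḡ) ⊇ E(G) such that every vertex of Ḡ has degree Δ or Δ+1, and the maximum codegree of Ḡ is at most max{Δ₂(G), 1}. -/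
/-!
Edges are added one at a time, always between a vertex `u` of degree `< Δ` and a vertex `v` of
degree `≤ Δ` that is joined to `u` by no walk of length three; such an edge keeps every codegree
at most `max Δ₂ 1`. As long as two deficient vertices are far apart in this sense, they are
joined. Afterwards every deficient vertex lies among the at most `1 + (Δ - 1)(Δ + 1)²` vertices
close to a fixed deficient one, so the total deficiency is at most `Δ` times that. From then on
each new edge lowers the deficiency without increasing excess plus deficiency, so few vertices
ever reach degree `Δ + 1`, and `n ≥ 2Δ⁴` always leaves a far partner of degree `≤ Δ`.
-/

namespace SimpleGraph

variable {V : Type*} {H : SimpleGraph V} {u v x y : V}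

lemma neighborSet_sup_edge_of_ne (hxu : x ≠ u) (hxv : x ≠ v) :
    (H ⊔ edge u v).neighborSet x = H.neighborSet x := by
  ext y
  simp [edge_adj, hxu, hxv]

lemma neighborSet_sup_edge_left (huv : u ≠ v) :
    (H ⊔ edge u v).neighborSet u = insert v (H.neighborSet u) := by
  ext y
  by_cases hy : y = u
  · subst hy
    simp [huv]
  · simp [edge_adj, Ne.symm hy, or_comm, eq_comm]

lemma neighborSet_sup_edge_right (huv : u ≠ v) :
    (H ⊔ edge u v).neighborSet v = insert u (H.neighborSet v) := by
  rw [edge_comm]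
  exact neighborSet_sup_edge_left huv.symm

lemma ncard_neighborSet_sup_edge [Finite V] [DecidableEq V] (huv : u ≠ v) (hadj : ¬H.Adj u v)
    (x : V) : ((H ⊔ edge u v).neighborSet x).ncard =
      (H.neighborSet x).ncard + if x = u ∨ x = v then 1 else 0 := by
  obtain rfl | hxu := eq_or_ne x u
  · have hv : v ∉ H.neighborSet x := hadj
    simp [neighborSet_sup_edge_left huv, Set.ncard_insert_of_notMem hv]
  obtain rfl | hxv := eq_or_ne x v
  · have hu : u ∉ H.neighborSet x := fun h => hadj h.symm
    simp [neighborSet_sup_edge_right huv, Set.ncard_insert_of_notMem hu]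
  simp [neighborSet_sup_edge_of_ne hxu hxv, hxu, hxv]

lemma ncard_neighborSet_sup_edge_le [Finite V] {D : ℕ} (huv : u ≠ v) (hadj : ¬H.Adj u v)
    (hD : ∀ x, (H.neighborSet x).ncard ≤ D) (hu : (H.neighborSet u).ncard < D)
    (hv : (H.neighborSet v).ncard < D) (x : V) : ((H ⊔ edge u v).neighborSet x).ncard ≤ D := by
  classical
  rw [ncard_neighborSet_sup_edge huv hadj]
  split_ifs with hx
  · rcases hx with rfl | rfl <;> omega
  · simpa using hD x

noncomputable def codegree (H : SimpleGraph V) (u v : V) : ℕ :=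
  (H.neighborSet u ∩ H.neighborSet v).ncard

lemma codegree_comm (H : SimpleGraph V) (u v : V) : H.codegree u v = H.codegree v u := by
  rw [codegree, codegree, Set.inter_comm]

def CodegreeLE (H : SimpleGraph V) (C : ℕ) : Prop :=
  ∀ ⦃x y⦄, x ≠ y → H.codegree x y ≤ C

/-- Joining such `u` and `v` raises only the codegrees `codegree u y` with `y ~ v` (and the
symmetric ones), and those were `0`: a common neighbour `w` would give the walk `u w y v`. -/
def IsFar (H : SimpleGraph V) (u v : V) : Prop :=
  u ≠ v ∧ ∀ a b, H.Adj u a → H.Adj a b → ¬H.Adj b v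

lemma IsFar.symm (h : H.IsFar u v) : H.IsFar v u :=
  ⟨h.1.symm, fun a b hva hab hbu => h.2 b a hbu.symm hab.symm hva.symm⟩

lemma IsFar.not_adj (h : H.IsFar u v) : ¬H.Adj u v :=
  fun huv => h.2 v u huv huv.symm huv

lemma codegree_sup_edge_self (h : H.IsFar u v) :
    (H ⊔ edge u v).codegree u v = H.codegree u v := by
  rw [codegree, codegree, neighborSet_sup_edge_left h.1, neighborSet_sup_edge_right h.1,
    Set.insert_inter_of_notMem (by simpa using h.1.symm), Set.inter_insert_of_notMem]
  exact H.irrefl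

lemma codegree_sup_edge_left_le [Finite V] (h : H.IsFar u v) (hyu : y ≠ u) (hyv : y ≠ v) :
    (H ⊔ edge u v).codegree u y ≤ max (H.codegree u y) 1 := by
  rw [codegree, neighborSet_sup_edge_left h.1, neighborSet_sup_edge_of_ne hyu hyv]
  by_cases hvy : H.Adj y v
  · have hsub : insert v (H.neighborSet u) ∩ H.neighborSet y ⊆ {v} := by
      rintro w ⟨rfl | huw, hyw⟩
      · rfl
      · exact (h.2 w y huw hyw.symm hvy).elim
    exact (Set.ncard_le_ncard hsub).trans ((Set.ncard_singleton v).trans_le (le_max_right _ _))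
  · rw [Set.insert_inter_of_notMem (show v ∉ H.neighborSet y from hvy)]
    exact le_max_left _ _

lemma CodegreeLE.sup_edge [Finite V] {C : ℕ} (hcod : H.CodegreeLE C) (hC : 1 ≤ C)
    (h : H.IsFar u v) : (H ⊔ edge u v).CodegreeLE C := by
  have left : ∀ {u v y}, H.IsFar u v → y ≠ u → y ≠ v →
      (H ⊔ edge u v).codegree u y ≤ C :=
    fun h hyu hyv => (codegree_sup_edge_left_le h hyu hyv).trans (max_le (hcod hyu.symm) hC)
  intro x y hxy
  obtain rfl | hxu := eq_or_ne x u
  · obtain rfl | hyv := eq_or_ne y v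
    · exact (codegree_sup_edge_self h).trans_le (hcod hxy)
    · exact left h hxy.symm hyv
  obtain rfl | hxv := eq_or_ne x v
  · rw [edge_comm]
    obtain rfl | hyu := eq_or_ne y u
    · exact (codegree_sup_edge_self h.symm).trans_le (hcod hxy)
    · exact left h.symm hxy.symm hyu
  rw [codegree_comm]
  obtain rfl | hyu := eq_or_ne y u
  · exact left h hxu hxv
  obtain rfl | hyv := eq_or_ne y v
  · rw [edge_comm]
    exact left h.symm hxv hxu
  rw [codegree, neighborSet_sup_edge_of_ne hxu hxv, neighborSet_sup_edge_of_ne hyu hyv,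
    Set.inter_comm]
  exact hcod hxy

lemma ncard_biUnion_neighborSet_le [Finite V] {D : ℕ} (hD : ∀ x, (H.neighborSet x).ncard ≤ D)
    (S : Set V) : (⋃ x ∈ S, H.neighborSet x).ncard ≤ S.ncard * D := by
  have hS := S.toFinite
  calc (⋃ x ∈ S, H.neighborSet x).ncard = (⋃ x ∈ hS.toFinset, H.neighborSet x).ncard := by
        simp only [Set.Finite.mem_toFinset]
    _ ≤ ∑ x ∈ hS.toFinset, (H.neighborSet x).ncard := Finset.set_ncard_biUnion_le _ _
    _ ≤ hS.toFinset.card * D := Finset.sum_le_card_nsmul _ _ _ fun x _ => hD x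
    _ = S.ncard * D := by rw [Set.ncard_eq_toFinset_card S hS]

lemma ncard_setOf_not_isFar_le [Finite V] {D : ℕ} (hD : ∀ x, (H.neighborSet x).ncard ≤ D)
    (u : V) : {v | ¬H.IsFar u v}.ncard ≤ 1 + (H.neighborSet u).ncard * D * D := by
  set T := ⋃ b ∈ ⋃ a ∈ H.neighborSet u, H.neighborSet a, H.neighborSet b
  have hsub : {v | ¬H.IsFar u v} ⊆ insert u T := by
    intro v hv
    simp only [IsFar, not_and_or, not_forall, not_not, ne_eq] at hv
    obtain rfl | ⟨a, b, hua, hab, hbv⟩ := hv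
    · exact Set.mem_insert _ _
    · exact Set.mem_insert_of_mem _ (Set.mem_biUnion (Set.mem_biUnion hua hab) hbv)
  have hT : T.ncard ≤ (H.neighborSet u).ncard * D * D :=
    (ncard_biUnion_neighborSet_le hD _).trans
      (Nat.mul_le_mul_right _ (ncard_biUnion_neighborSet_le hD _))
  have := (Set.ncard_le_ncard hsub).trans (Set.ncard_insert_le u T)
  omega

lemma ncard_setOf_not_isFar_le_of_lt {Δ : ℕ} [Finite V]
    (hD : ∀ x, (H.neighborSet x).ncard ≤ Δ + 1) (hu : (H.neighborSet u).ncard < Δ) :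
    {v | ¬H.IsFar u v}.ncard ≤ 1 + (Δ - 1) * (Δ + 1) ^ 2 := by
  refine (ncard_setOf_not_isFar_le hD u).trans ?_
  rw [mul_assoc, ← sq]
  exact Nat.add_le_add_left (Nat.mul_le_mul_right _ (by omega)) 1

section Deficiency

variable [Fintype V] (Δ : ℕ)

/-- With truncated subtraction, `deficiency` sums the shortfalls of the degrees below `Δ`
and `excess` their overshoots above `Δ`. -/
noncomputable def deficiency (H : SimpleGraph V) : ℕ := ∑ x, (Δ - (H.neighborSet x).ncard)

noncomputable def excess (H : SimpleGraph V) : ℕ := ∑ x, ((H.neighborSet x).ncard - Δ)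

variable {Δ}

lemma deficiency_eq_zero_iff : H.deficiency Δ = 0 ↔ ∀ x, Δ ≤ (H.neighborSet x).ncard := by
  simp [deficiency, Finset.sum_eq_zero_iff, Nat.sub_eq_zero_iff_le]

lemma excess_eq_zero_of_forall_le (h : ∀ x, (H.neighborSet x).ncard ≤ Δ) : H.excess Δ = 0 :=
  Finset.sum_eq_zero fun x _ => Nat.sub_eq_zero_of_le (h x)

lemma deficiency_le_ncard_mul {S : Set V} (hS : ∀ x, (H.neighborSet x).ncard < Δ → x ∈ S) :
    H.deficiency Δ ≤ S.ncard * Δ := by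
  classical
  calc H.deficiency Δ = ∑ x ∈ S.toFinset, (Δ - (H.neighborSet x).ncard) := by
        refine (Finset.sum_subset (Finset.subset_univ _) fun x _ hx => ?_).symm
        have : x ∉ S := by simpa using hx
        exact Nat.sub_eq_zero_of_le (not_lt.1 (mt (hS x) this))
    _ ≤ S.toFinset.card * Δ := Finset.sum_le_card_nsmul _ _ _ fun x _ => Nat.sub_le _ _
    _ = S.ncard * Δ := by rw [Set.ncard_eq_toFinset_card']

lemma ncard_setOf_lt_le_excess : {x | Δ < (H.neighborSet x).ncard}.ncard ≤ H.excess Δ := by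
  classical
  rw [Set.ncard_eq_toFinset_card', Set.toFinset_ofPred, Finset.card_filter]
  exact Finset.sum_le_sum fun x _ => by split_ifs <;> omega

lemma deficiency_sup_edge_lt (huv : u ≠ v) (hadj : ¬H.Adj u v)
    (hu : (H.neighborSet u).ncard < Δ) :
    (H ⊔ edge u v).deficiency Δ < H.deficiency Δ := by
  classical
  have hdeg := ncard_neighborSet_sup_edge huv hadj
  refine Finset.sum_lt_sum (fun x _ => ?_) ⟨u, Finset.mem_univ _, ?_⟩
  · have := hdeg x
    omega
  · have := hdeg u
    simp only [true_or, if_true] at this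
    omega

lemma excess_add_deficiency_sup_edge_le (huv : u ≠ v) (hadj : ¬H.Adj u v)
    (hu : (H.neighborSet u).ncard < Δ) (hv : (H.neighborSet v).ncard ≤ Δ) :
    (H ⊔ edge u v).excess Δ + (H ⊔ edge u v).deficiency Δ ≤
      H.excess Δ + H.deficiency Δ := by
  classical
  -- `u` loses one unit of deficiency; `v` gains at most one unit of excess
  have key : ∀ x, (((H ⊔ edge u v).neighborSet x).ncard - Δ +
      (Δ - ((H ⊔ edge u v).neighborSet x).ncard)) + (if x = u then 1 else 0) ≤
      ((H.neighborSet x).ncard - Δ + (Δ - (H.neighborSet x).ncard)) + if x = v then 1 else 0 := by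
    intro x
    rw [ncard_neighborSet_sup_edge huv hadj]
    obtain rfl | hxu := eq_or_ne x u
    · simp [huv]
      omega
    obtain rfl | hxv := eq_or_ne x v
    · simp [hxu]
      omega
    simp [hxu, hxv]
  have := Finset.sum_le_sum fun x (_ : x ∈ Finset.univ) => key x
  simp only [Finset.sum_add_distrib, Finset.sum_ite_eq', Finset.mem_univ, if_true] at this
  rw [excess, deficiency, excess, deficiency]
  omega

lemma exists_isFar_and_ncard_neighborSet_le
    (h : {v | ¬H.IsFar u v}.ncard + H.excess Δ < Fintype.card V) :
    ∃ v, H.IsFar u v ∧ (H.neighborSet v).ncard ≤ Δ := by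
  by_contra! hcon
  have hcover : Set.univ ⊆ {v | ¬H.IsFar u v} ∪ {x | Δ < (H.neighborSet x).ncard} :=
    fun v _ => (em (H.IsFar u v)).elim (fun hv => Or.inr (hcon v hv)) Or.inl
  have := (Set.ncard_le_ncard hcover).trans (Set.ncard_union_le _ _)
  rw [Set.ncard_univ, Nat.card_eq_fintype_card] at this
  have := ncard_setOf_lt_le_excess (H := H) (Δ := Δ)
  omega

end Deficiency

def IsNearRegular (K : SimpleGraph V) (Δ : ℕ) : Prop :=
  ∀ x, (K.neighborSet x).ncard = Δ ∨ (K.neighborSet x).ncard = Δ + 1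

variable [Fintype V] {Δ C : ℕ}

theorem exists_isNearRegular_codegreeLE_of_excess_add_deficiency_le {M : ℕ} (hC : 1 ≤ C)
    (hn : 1 + (Δ - 1) * (Δ + 1) ^ 2 + M ≤ Fintype.card V) (H : SimpleGraph V)
    (hdeg : ∀ x, (H.neighborSet x).ncard ≤ Δ + 1) (hcod : H.CodegreeLE C)
    (hM : H.excess Δ + H.deficiency Δ ≤ M) :
    ∃ K, H ≤ K ∧ K.IsNearRegular Δ ∧ K.CodegreeLE C := by
  induction hd : H.deficiency Δ using Nat.strong_induction_on generalizing H with
  | _ d ih =>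
  by_cases hfull : ∀ x, Δ ≤ (H.neighborSet x).ncard
  · exact ⟨H, le_rfl, fun x => by have := hdeg x; have := hfull x; omega, hcod⟩
  obtain ⟨u, hu⟩ : ∃ u, (H.neighborSet u).ncard < Δ := by simpa using hfull
  have hd0 : d ≠ 0 := fun h0 => by
    have := (deficiency_eq_zero_iff.1 (hd.trans h0)) u
    omega
  have hclose := ncard_setOf_not_isFar_le_of_lt hdeg hu
  obtain ⟨v, hfar, hv⟩ :=
    exists_isFar_and_ncard_neighborSet_le (Δ := Δ) (H := H) (u := u) (by omega)
  obtain ⟨K, hHK, hK⟩ := ih _ (hd ▸ deficiency_sup_edge_lt hfar.1 hfar.not_adj hu)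
    (H ⊔ edge u v) (ncard_neighborSet_sup_edge_le hfar.1 hfar.not_adj hdeg (by omega) (by omega))
    (hcod.sup_edge hC hfar)
    ((excess_add_deficiency_sup_edge_le hfar.1 hfar.not_adj hu hv).trans hM) rfl
  exact ⟨K, le_sup_left.trans hHK, hK⟩

lemma one_add_pred_mul_succ_sq_add_mul_le (hΔ : 2 ≤ Δ) :
    1 + (Δ - 1) * (Δ + 1) ^ 2 + (1 + (Δ - 1) * (Δ + 1) ^ 2) * Δ ≤ 2 * Δ ^ 4 := by
  obtain ⟨e, rfl⟩ : ∃ e, Δ = e + 2 := ⟨Δ - 2, by omega⟩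
  rw [show e + 2 - 1 = e + 1 by omega]
  ring_nf
  nlinarith [sq_nonneg e]

theorem exists_isNearRegular_codegreeLE_of_ncard_neighborSet_le (hΔ : 2 ≤ Δ) (hC : 1 ≤ C)
    (hn : 2 * Δ ^ 4 ≤ Fintype.card V) (H : SimpleGraph V)
    (hdeg : ∀ x, (H.neighborSet x).ncard ≤ Δ) (hcod : H.CodegreeLE C) :
    ∃ K, H ≤ K ∧ K.IsNearRegular Δ ∧ K.CodegreeLE C := by
  induction hd : H.deficiency Δ using Nat.strong_induction_on generalizing H with
  | _ d ih =>
  by_cases hpair :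
      ∃ u v, (H.neighborSet u).ncard < Δ ∧ (H.neighborSet v).ncard < Δ ∧ H.IsFar u v
  · obtain ⟨u, v, hu, hv, hfar⟩ := hpair
    obtain ⟨K, hHK, hK⟩ := ih _ (hd ▸ deficiency_sup_edge_lt hfar.1 hfar.not_adj hu)
      (H ⊔ edge u v) (ncard_neighborSet_sup_edge_le hfar.1 hfar.not_adj hdeg hu hv)
      (hcod.sup_edge hC hfar) rfl
    exact ⟨K, le_sup_left.trans hHK, hK⟩
  by_cases hfull : ∀ x, Δ ≤ (H.neighborSet x).ncard
  · exact ⟨H, le_rfl, fun x => Or.inl ((hdeg x).antisymm (hfull x)), hcod⟩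
  obtain ⟨u, hu⟩ : ∃ u, (H.neighborSet u).ncard < Δ := by simpa using hfull
  have hdeg' (x : V) : (H.neighborSet x).ncard ≤ Δ + 1 := (hdeg x).trans (Nat.le_succ Δ)
  have hsmall : H.deficiency Δ ≤ (1 + (Δ - 1) * (Δ + 1) ^ 2) * Δ :=
    (deficiency_le_ncard_mul fun v hv hfar => hpair ⟨u, v, hu, hv, hfar⟩).trans
      (Nat.mul_le_mul_right _ (ncard_setOf_not_isFar_le_of_lt hdeg' hu))
  exact exists_isNearRegular_codegreeLE_of_excess_add_deficiency_le hC
    ((one_add_pred_mul_succ_sq_add_mul_le hΔ).trans hn) H hdeg' hcod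
    (by rw [excess_eq_zero_of_forall_le hdeg, zero_add]; exact hsmall)

end SimpleGraph

theorem regularization_step {V : Type} [Fintype V] (Δ : ℕ) (hΔ : 2 ≤ Δ)
    (hn : 2 * Δ^4 ≤ Fintype.card V)
    (G : SimpleGraph V) [DecidableRel G.Adj] (hdeg : G.maxDegree ≤ Δ)
    (Δ₂ : ℕ) (hΔ₂ : ∀ u v : V, u ≠ v → Nat.card {w : V | G.Adj u w ∧ G.Adj v w} ≤ Δ₂) :
    ∃ H : SimpleGraph V, G ≤ H ∧
      (∀ v : V, Nat.card {u : V | H.Adj v u} = Δ ∨ Nat.card {u : V | H.Adj v u} = Δ + 1) ∧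
      ∀ u v : V, u ≠ v → Nat.card {w : V | H.Adj u w ∧ H.Adj v w} ≤ max Δ₂ 1 := by
  have hdegG (v : V) : (G.neighborSet v).ncard ≤ Δ := by
    rw [← Nat.card_coe_set_eq, Nat.card_eq_fintype_card, G.card_neighborSet_eq_degree]
    exact (G.degree_le_maxDegree v).trans hdeg
  have hcodG : G.CodegreeLE (max Δ₂ 1) := fun u v huv =>
    (hΔ₂ u v huv).trans (le_max_left _ _)
  obtain ⟨H, hGH, hreg, hcod⟩ :=
    SimpleGraph.exists_isNearRegular_codegreeLE_of_ncard_neighborSet_le hΔ (le_max_right _ _) hn G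
      hdegG hcodG
  exact ⟨H, hGH, hreg, fun u v huv => hcod huv⟩
end
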